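/- Let B_h, B_v be M×N matrices with entries in {1, i, −1, −i} such that (a) they form a periodic complementary pair, (b) B_h ⋆ B_v = B_v ⋆ B_h, and (c) B_h(k,ℓ) = ±B_v(k,ℓ) for every entry. Then A = (B_h + B_v)/2 + ((B_h − B_v)/2)·j is a perfect quaternion array whose entries all lie in {±1, ±i, ±j, ±k}. -/

import Mathlib

noncomputable section
open scoped BigOperators

/-- Embedding of ℂ into the quaternions (zero j and k components). -/
def cq (z : ℂ) : Quaternion ℝ := ⟨z.re, z.im, 0, 0⟩

/-- The quaternion unit i. -/
def qi : Quaternion ℝ := ⟨0, 1, 0, 0⟩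

/-- The quaternion unit j. -/
def qj : Quaternion ℝ := ⟨0, 0, 1, 0⟩

/-- The quaternion unit k. -/
def qk : Quaternion ℝ := ⟨0, 0, 0, 1⟩

/-- Conjugate-free periodic cross-correlation of quaternion matrices. -/
def qcorr {M N : ℕ} [NeZero M] [NeZero N]
    (X Y : Matrix (ZMod M) (ZMod N) (Quaternion ℝ)) :
    Matrix (ZMod M) (ZMod N) (Quaternion ℝ) :=
  fun m n => ∑ k, ∑ l, X k l * Y (k + m) (l + n)

/-- Right periodic autocorrelation of a quaternion matrix. -/
def Rq {M N : ℕ} [NeZero M] [NeZero N]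
    (A : Matrix (ZMod M) (ZMod N) (Quaternion ℝ)) :
    Matrix (ZMod M) (ZMod N) (Quaternion ℝ) :=
  qcorr A (fun k l => star (A k l))

/-- Conjugate-free periodic cross-correlation of complex matrices. -/
def ccorr {M N : ℕ} [NeZero M] [NeZero N]
    (X Y : Matrix (ZMod M) (ZMod N) ℂ) : Matrix (ZMod M) (ZMod N) ℂ :=
  fun m n => ∑ k, ∑ l, X k l * Y (k + m) (l + n)

/-- Complex 2D periodic autocorrelation. -/
def Rc {M N : ℕ} [NeZero M] [NeZero N]
    (A : Matrix (ZMod M) (ZMod N) ℂ) : Matrix (ZMod M) (ZMod N) ℂ :=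
  ccorr A (fun k l => star (A k l))

/-!
Write `A = cq C + cq D * j` with `C = (B_h + B_v)/2` and `D = (B_h - B_v)/2`. Since `j z = conj z j`
for complex `z`, each product `A(k,ℓ) · star A(k+m,ℓ+n)` splits into a complex part
`C C̄' + D D̄'` and a `j`-part `D C' - C D'`. Summing, `R_A = (R_C + R_D) + (D ⋆ C - C ⋆ D) j`, and by
bilinearity `R_C + R_D = (R_{B_h} + R_{B_v})/2` and `D ⋆ C - C ⋆ D = (B_h ⋆ B_v - B_v ⋆ B_h)/2`,
which vanish off `(0,0)` by the complementarity and commutation hypotheses. Since `B_h = ±B_v`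
entrywise, one of `C`, `D` vanishes at each entry and the other equals `B_h(k,ℓ)`.
-/

lemma cq_eq_coe (z : ℂ) : cq z = (z : Quaternion ℝ) := rfl

lemma cq_zero : cq 0 = 0 := rfl
lemma cq_one : cq 1 = 1 := rfl

lemma cq_neg (z : ℂ) : cq (-z) = -cq z := map_neg Quaternion.ofComplex z
lemma cq_add (z w : ℂ) : cq (z + w) = cq z + cq w := map_add Quaternion.ofComplex z w
lemma cq_sub (z w : ℂ) : cq (z - w) = cq z - cq w := map_sub Quaternion.ofComplex z w

lemma cq_sum {ι : Type*} (s : Finset ι) (f : ι → ℂ) :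
    cq (∑ x ∈ s, f x) = ∑ x ∈ s, cq (f x) :=
  map_sum Quaternion.ofComplex f s

@[simp] lemma qj_re : qj.re = 0 := rfl
@[simp] lemma qj_imI : qj.imI = 0 := rfl
@[simp] lemma qj_imJ : qj.imJ = 1 := rfl
@[simp] lemma qj_imK : qj.imK = 0 := rfl

lemma cq_I : cq Complex.I = qi := by
  ext <;> simp [cq_eq_coe, qi]

lemma qi_mul_qj : qi * qj = qk := by
  rw [← cq_I, cq_eq_coe]
  ext <;> simp [qk, Quaternion.re_mul, Quaternion.imI_mul, Quaternion.imJ_mul, Quaternion.imK_mul]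

lemma cq_add_cq_mul_qj_mul_star (c d c' d' : ℂ) :
    (cq c + cq d * qj) * star (cq c' + cq d' * qj)
      = cq (c * star c' + d * star d') + cq (d * c' - c * d') * qj := by
  simp only [cq_eq_coe]
  ext <;> simp [Quaternion.re_mul, Quaternion.imI_mul, Quaternion.imJ_mul, Quaternion.imK_mul,
    Complex.mul_re, Complex.mul_im] <;> ring

section Correlation

variable {M N : ℕ} [NeZero M] [NeZero N]

lemma Rq_cq_add_cq_mul_qj (C D : Matrix (ZMod M) (ZMod N) ℂ) (m : ZMod M) (n : ZMod N) :
    Rq (fun k l => cq (C k l) + cq (D k l) * qj) m n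
      = cq (Rc C m n + Rc D m n) + cq (ccorr D C m n - ccorr C D m n) * qj := by
  simp only [Rq, qcorr, cq_add_cq_mul_qj_mul_star]
  simp only [Rc, ccorr, cq_add, cq_sub, cq_sum, Finset.sum_add_distrib, Finset.sum_sub_distrib,
    Finset.sum_mul, sub_mul]

lemma Rc_half_add_add_Rc_half_sub (X Y : Matrix (ZMod M) (ZMod N) ℂ) (m : ZMod M) (n : ZMod N) :
    Rc (fun k l => (X k l + Y k l) / 2) m n + Rc (fun k l => (X k l - Y k l) / 2) m n
      = (Rc X m n + Rc Y m n) / 2 := by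
  simp only [Rc, ccorr, ← Finset.sum_add_distrib, Finset.sum_div]
  refine Finset.sum_congr rfl fun k _ => Finset.sum_congr rfl fun l _ => ?_
  simp only [star_div₀, star_add, star_sub, star_ofNat]
  ring

lemma ccorr_half_sub_half_add_sub (X Y : Matrix (ZMod M) (ZMod N) ℂ) (m : ZMod M) (n : ZMod N) :
    ccorr (fun k l => (X k l - Y k l) / 2) (fun k l => (X k l + Y k l) / 2) m n
        - ccorr (fun k l => (X k l + Y k l) / 2) (fun k l => (X k l - Y k l) / 2) m n
      = (ccorr X Y m n - ccorr Y X m n) / 2 := by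
  simp only [ccorr, ← Finset.sum_sub_distrib, Finset.sum_div]
  refine Finset.sum_congr rfl fun k _ => Finset.sum_congr rfl fun l _ => ?_
  ring

end Correlation

lemma cq_mem_of_mem_quaternary {z : ℂ} (hz : z ∈ ({1, Complex.I, -1, -Complex.I} : Set ℂ)) :
    cq z ∈ ({1, -1, qi, -qi, qj, -qj, qk, -qk} : Set (Quaternion ℝ)) := by
  rcases hz with rfl | rfl | rfl | rfl <;> simp [cq_one, cq_I, cq_neg]

lemma cq_mul_qj_mem_of_mem_quaternary {z : ℂ}
    (hz : z ∈ ({1, Complex.I, -1, -Complex.I} : Set ℂ)) :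
    cq z * qj ∈ ({1, -1, qi, -qi, qj, -qj, qk, -qk} : Set (Quaternion ℝ)) := by
  rcases hz with rfl | rfl | rfl | rfl <;> simp [cq_one, cq_I, cq_neg, qi_mul_qj]

lemma cq_half_add_add_cq_half_sub_mul_qj_mem {x y : ℂ}
    (hx : x ∈ ({1, Complex.I, -1, -Complex.I} : Set ℂ)) (hxy : x = y ∨ x = -y) :
    cq ((x + y) / 2) + cq ((x - y) / 2) * qj
      ∈ ({1, -1, qi, -qi, qj, -qj, qk, -qk} : Set (Quaternion ℝ)) := by
  rcases hxy with rfl | hxy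
  · rw [add_self_div_two, sub_self, zero_div, cq_zero, zero_mul, add_zero]
    exact cq_mem_of_mem_quaternary hx
  · obtain rfl : y = -x := by rw [hxy, neg_neg]
    rw [add_neg_cancel, zero_div, sub_neg_eq_add, add_self_div_two, cq_zero, zero_add]
    exact cq_mul_qj_mem_of_mem_quaternary hx

theorem basic_unit_pqa_from_quaternary_pcp_general {M N : ℕ} [NeZero M] [NeZero N]
    (Bh Bv : Matrix (ZMod M) (ZMod N) ℂ)
    (halphh : ∀ k l, Bh k l ∈ ({1, Complex.I, -1, -Complex.I} : Set ℂ))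
    (hpcp : ∀ m n, (m, n) ≠ (0, 0) → Rc Bh m n + Rc Bv m n = 0)
    (hcomm : ccorr Bh Bv = ccorr Bv Bh)
    (hsign : ∀ k l, Bh k l = Bv k l ∨ Bh k l = -Bv k l) :
    (∀ m n, (m, n) ≠ (0, 0) →
      Rq (fun k l => cq ((Bh k l + Bv k l) / 2) + cq ((Bh k l - Bv k l) / 2) * qj) m n = 0) ∧
    (∀ k l, cq ((Bh k l + Bv k l) / 2) + cq ((Bh k l - Bv k l) / 2) * qj ∈
      ({1, -1, qi, -qi, qj, -qj, qk, -qk} : Set (Quaternion ℝ))) := by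
  refine ⟨fun m n hmn => ?_,
    fun k l => cq_half_add_add_cq_half_sub_mul_qj_mem (halphh k l) (hsign k l)⟩
  rw [Rq_cq_add_cq_mul_qj (fun k l => (Bh k l + Bv k l) / 2) (fun k l => (Bh k l - Bv k l) / 2),
    Rc_half_add_add_Rc_half_sub, ccorr_half_sub_half_add_sub, hpcp m n hmn, hcomm, sub_self,
    zero_div, cq_zero, zero_mul, add_zero]

theorem basic_unit_pqa_from_quaternary_pcp {M N : ℕ} [NeZero M] [NeZero N]
    (Bh Bv : Matrix (ZMod M) (ZMod N) ℂ)
    (halphh : ∀ k l, Bh k l ∈ ({1, Complex.I, -1, -Complex.I} : Set ℂ))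
    (halphv : ∀ k l, Bv k l ∈ ({1, Complex.I, -1, -Complex.I} : Set ℂ))
    (hpcp : ∀ m n, (m, n) ≠ (0, 0) → Rc Bh m n + Rc Bv m n = 0)
    (hcomm : ccorr Bh Bv = ccorr Bv Bh)
    (hsign : ∀ k l, Bh k l = Bv k l ∨ Bh k l = -Bv k l) :
    (∀ m n, (m, n) ≠ (0, 0) →
      Rq (fun k l => cq ((Bh k l + Bv k l) / 2) + cq ((Bh k l - Bv k l) / 2) * qj) m n = 0) ∧
    (∀ k l, cq ((Bh k l + Bv k l) / 2) + cq ((Bh k l - Bv k l) / 2) * qj ∈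
      ({1, -1, qi, -qi, qj, -qj, qk, -qk} : Set (Quaternion ℝ))) :=
  basic_unit_pqa_from_quaternary_pcp_general Bh Bv halphh hpcp hcomm hsign
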